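/- Every finite 3-degenerate graph G has a gap-free K₃-WORM chromatic spectrum: for every integer t with W^-(G) ≤ t ≤ W^+(G), the graph G admits a K₃-WORM coloring using exactly t colors. -/

import Mathlib

open SimpleGraph

/-- A K₃-WORM coloring of `G`: every triangle receives exactly two colors. -/
def IsWormColoring {V : Type*} (G : SimpleGraph V) (c : V → ℕ) : Prop :=
  ∀ u v w : V, G.Adj u v → G.Adj u w → G.Adj v w → ({c u, c v, c w} : Finset ℕ).card = 2

/-- The number of colors used by a coloring of a finite vertex set. -/
def colorsUsed {V : Type*} [Fintype V] (c : V → ℕ) : ℕ := (Finset.univ.image c).card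

/-- The K₃-WORM feasible set of `G`: the set of `s` such that `G` has a
K₃-WORM coloring using exactly `s` colors. -/
def wormFeasible {V : Type*} [Fintype V] (G : SimpleGraph V) : Set ℕ :=
  {s | ∃ c : V → ℕ, IsWormColoring G c ∧ colorsUsed c = s}

/-- `G` is triangle-free: it has no three pairwise adjacent vertices. -/
def TriangleFree {V : Type*} (G : SimpleGraph V) : Prop :=
  ∀ u v w : V, G.Adj u v → G.Adj u w → G.Adj v w → False

/-- The strong product `G ⊠ K₂`, on vertex set `V × Bool`:
`(u,i)` and `(v,j)` are adjacent iff (`u = v` and `i ≠ j`) or `u`,`v` are adjacent in `G`. -/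
def strongProdK2 {V : Type*} (G : SimpleGraph V) : SimpleGraph (V × Bool) :=
  SimpleGraph.fromRel (fun p q => (p.1 = q.1 ∧ p.2 ≠ q.2) ∨ G.Adj p.1 q.1)

/-- `G` is 3-degenerate: every nonempty set `S` of vertices contains a vertex
with at most 3 neighbors inside `S`. -/
def ThreeDegenerate {V : Type*} (G : SimpleGraph V) [DecidableRel G.Adj] : Prop :=
  ∀ S : Finset V, S.Nonempty → ∃ v ∈ S, (S.filter (G.Adj v)).card ≤ 3

/-!
Remove a vertex `v` with at most three neighbours. If the remaining graph has a WORM colouring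
with at least two colours, it extends to `v` without a new colour: the neighbourhood of `v` spans
at most a triangle, and a colour already used there (or any colour other than that of a
monochromatic neighbourhood) keeps every triangle through `v` two-coloured. Deleting a vertex
changes the number of colours by at most one, so by induction on the vertex set every value
strictly between two realised values is realised on `G - v` and then, unchanged, on `G`.
-/

open Finset Function

section Colors

variable {α : Type*} [DecidableEq α]

theorem card_triple_eq_two_iff (a p q : α) :
    #{a, p, q} = 2 ↔ (p = q ∧ a ≠ p) ∨ (p ≠ q ∧ (a = p ∨ a = q)) := by
  rcases eq_or_ne p q with rfl | hpq
  · simp [card_pair_eq_two_iff]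
  · grind [card_insert_of_notMem, card_insert_of_mem, card_pair]

/-- If `p = q = r`, any other colour of `I` works. Otherwise one of `p, q, r` does: in a
two-coloured triangle the colour used once, else the colour of a vertex on every edge present. -/
theorem exists_mem_card_triple_eq_two {I : Finset α} (hI : 2 ≤ #I) {p q r : α}
    (hp : p ∈ I) (hq : q ∈ I) (hr : r ∈ I) {A B C : Prop}
    (htri : A → B → C → #{p, q, r} = 2) :
    ∃ a ∈ I, (A → #{a, p, q} = 2) ∧ (B → #{a, p, r} = 2) ∧ (C → #{a, q, r} = 2) := by
  simp only [card_triple_eq_two_iff] at htri ⊢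
  by_cases hall : p = q ∧ q = r
  · obtain ⟨a, ha, hne⟩ := exists_mem_ne hI p
    exact ⟨a, ha, by grind⟩
  · by_cases A <;> by_cases B <;> by_cases C <;> by_cases p = q <;> by_cases p = r <;>
      by_cases q = r <;>
      first
        | (refine ⟨p, hp, ?_⟩; grind)
        | (refine ⟨q, hq, ?_⟩; grind)
        | (refine ⟨r, hr, ?_⟩; grind)

theorem exists_subset_triple {N T : Finset α} (hNT : N ⊆ T) (hN : #N ≤ 3) (hT : T.Nonempty) :
    ∃ x ∈ T, ∃ y ∈ T, ∃ z ∈ T, N ⊆ {x, y, z} := by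
  obtain ⟨d, hd⟩ := hT
  rcases (by omega : #N = 0 ∨ #N = 1 ∨ #N = 2 ∨ #N = 3) with h | h | h | h
  · exact ⟨d, hd, d, hd, d, hd, by simp [card_eq_zero.mp h]⟩
  · obtain ⟨x, rfl⟩ := card_eq_one.mp h
    have hx : x ∈ T := hNT (mem_singleton_self x)
    exact ⟨x, hx, x, hx, x, hx, by simp⟩
  · obtain ⟨x, y, -, rfl⟩ := card_eq_two.mp h
    exact ⟨x, hNT (by simp), y, hNT (by simp), y, hNT (by simp), by simp⟩
  · obtain ⟨x, y, z, -, -, -, rfl⟩ := card_eq_three.mp h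
    exact ⟨x, hNT (by simp), y, hNT (by simp), z, hNT (by simp), subset_rfl⟩

variable {β : Type*} [DecidableEq β]

theorem card_image_le_card_image_erase_add_one {S : Finset β} {v : β} (hv : v ∈ S)
    (c : β → α) : #(S.image c) ≤ #((S.erase v).image c) + 1 :=
  calc #(S.image c) = #(insert (c v) ((S.erase v).image c)) := by
        rw [← image_insert, insert_erase hv]
    _ ≤ #((S.erase v).image c) + 1 := card_insert_le _ _

theorem image_update_eq_image_erase {S : Finset β} {v : β} (hv : v ∈ S) {c : β → α} {a : α}
    (ha : a ∈ (S.erase v).image c) : S.image (update c v a) = (S.erase v).image c := by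
  have hrest : (S.erase v).image (update c v a) = (S.erase v).image c :=
    image_congr fun u hu => update_of_ne (ne_of_mem_erase hu) a c
  rw [← insert_erase hv, image_insert, erase_insert (notMem_erase v S), update_self, hrest,
    insert_eq_of_mem ha]

end Colors

section Graph

variable {V α : Type*} (G : SimpleGraph V) [DecidableEq α]

def IsWormColoringOn (S : Finset V) (c : V → α) : Prop :=
  ∀ u ∈ S, ∀ v ∈ S, ∀ w ∈ S,
    G.Adj u v → G.Adj u w → G.Adj v w → #{c u, c v, c w} = 2

variable {G}

theorem isWormColoringOn_univ_iff [Fintype V] {c : V → ℕ} :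
    IsWormColoringOn G univ c ↔ IsWormColoring G c := by
  simp [IsWormColoringOn, IsWormColoring]

theorem IsWormColoringOn.mono {S T : Finset V} {c : V → α} (hc : IsWormColoringOn G S c)
    (hTS : T ⊆ S) : IsWormColoringOn G T c :=
  fun u hu v hv w hw => hc u (hTS hu) v (hTS hv) w (hTS hw)

variable [DecidableEq V]

theorem IsWormColoringOn.update {S : Finset V} {v : V} {c : V → α}
    (hc : IsWormColoringOn G (S.erase v) c) {a : α}
    (ha : ∀ u ∈ S, ∀ w ∈ S, G.Adj v u → G.Adj v w → G.Adj u w → #{a, c u, c w} = 2) :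
    IsWormColoringOn G S (update c v a) := by
  intro x hx y hy z hz hxy hxz hyz
  by_cases hxv : x = v
  · subst hxv
    simpa [hxy.ne', hxz.ne'] using ha y hy z hz hxy hxz hyz
  by_cases hyv : y = v
  · subst hyv
    rw [insert_comm]
    simpa [hxv, hyz.ne'] using ha x hx z hz hxy.symm hyz hxz
  by_cases hzv : z = v
  · subst hzv
    rw [pair_comm, insert_comm]
    simpa [hxv, hyv] using ha x hx y hy hxz.symm hyz.symm hxy
  simpa [hxv, hyv, hzv] using
    hc x (mem_erase.2 ⟨hxv, hx⟩) y (mem_erase.2 ⟨hyv, hy⟩) z (mem_erase.2 ⟨hzv, hz⟩)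
      hxy hxz hyz

variable [DecidableRel G.Adj]

theorem IsWormColoringOn.exists_update_of_card_filter_adj_le_three {S : Finset V} {v : V}
    (hdeg : #(S.filter (G.Adj v)) ≤ 3) {c : V → α}
    (hc : IsWormColoringOn G (S.erase v) c) (hcolors : 2 ≤ #((S.erase v).image c)) :
    ∃ a ∈ (S.erase v).image c, IsWormColoringOn G S (Function.update c v a) := by
  have hN : S.filter (G.Adj v) ⊆ S.erase v := fun u hu =>
    mem_erase.2 ⟨(mem_filter.1 hu).2.ne', (mem_filter.1 hu).1⟩
  have hne : (S.erase v).Nonempty :=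
    image_nonempty.1 (card_pos.1 (by omega : 0 < #((S.erase v).image c)))
  obtain ⟨x, hx, y, hy, z, hz, hxyz⟩ := exists_subset_triple hN hdeg hne
  obtain ⟨a, ha, hA, hB, hC⟩ := exists_mem_card_triple_eq_two hcolors
    (mem_image_of_mem c hx) (mem_image_of_mem c hy) (mem_image_of_mem c hz)
    (hc x hx y hy z hz)
  refine ⟨a, ha, hc.update fun u hu w hw hvu hvw huw => ?_⟩
  have hu' := hxyz (mem_filter.2 ⟨hu, hvu⟩)
  have hw' := hxyz (mem_filter.2 ⟨hw, hvw⟩)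
  simp only [mem_insert, mem_singleton] at hu' hw'
  rcases hu' with rfl | rfl | rfl <;> rcases hw' with rfl | rfl | rfl <;>
    first
      | exact (G.irrefl huw).elim
      | exact hA huw
      | exact hB huw
      | exact hC huw
      | (rw [pair_comm]; exact hA huw.symm)
      | (rw [pair_comm]; exact hB huw.symm)
      | (rw [pair_comm]; exact hC huw.symm)

theorem ThreeDegenerate.exists_isWormColoringOn_card_image_eq (hG : ThreeDegenerate G)
    (S : Finset V) {c₁ c₂ : V → α} (hc₁ : IsWormColoringOn G S c₁)
    (hc₂ : IsWormColoringOn G S c₂) {t : ℕ} (ht₁ : #(S.image c₁) ≤ t)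
    (ht₂ : t ≤ #(S.image c₂)) :
    ∃ c : V → α, IsWormColoringOn G S c ∧ #(S.image c) = t := by
  induction S using strongInduction generalizing c₁ c₂ with
  | H S ih =>
  rcases ht₁.eq_or_lt with rfl | ht₁
  · exact ⟨c₁, hc₁, rfl⟩
  rcases ht₂.eq_or_lt with rfl | ht₂
  · exact ⟨c₂, hc₂, rfl⟩
  have hS : S.Nonempty := nonempty_of_ne_empty (by rintro rfl; simp at ht₂)
  have hcolors : 2 ≤ t := by have := (hS.image c₁).card_pos; omega
  obtain ⟨v, hv, hdeg⟩ := hG S hS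
  have hrestrict {c : V → α} (hc : IsWormColoringOn G S c) :
      IsWormColoringOn G (S.erase v) c := hc.mono (erase_subset v S)
  obtain ⟨c, hc, hct⟩ := ih (S.erase v) (erase_ssubset hv) (hrestrict hc₁) (hrestrict hc₂)
    ((card_le_card (image_subset_image (erase_subset v S))).trans ht₁.le)
    (by have := card_image_le_card_image_erase_add_one hv c₂; omega)
  obtain ⟨a, ha, hca⟩ := hc.exists_update_of_card_filter_adj_le_three hdeg (hct ▸ hcolors)
  exact ⟨_, hca, by rw [image_update_eq_image_erase hv ha, hct]⟩

end Graph

/-- Every finite 3-degenerate graph has a gap-free K₃-WORM chromatic spectrum: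
for every `t` between the lower chromatic number `W⁻(G)` and upper chromatic number
`W⁺(G)`, the graph admits a K₃-WORM coloring with exactly `t` colors. -/
theorem threeDegenerate_worm_spectrum_gapFree {V : Type*} [Fintype V]
    (G : SimpleGraph V) [DecidableRel G.Adj] (hdeg : ThreeDegenerate G) :
    ∀ wmin wmax t : ℕ, IsLeast (wormFeasible G) wmin →
      IsGreatest (wormFeasible G) wmax →
      wmin ≤ t → t ≤ wmax → t ∈ wormFeasible G := by
  classical
  rintro wmin wmax t ⟨⟨c₁, hc₁, rfl⟩, -⟩ ⟨⟨c₂, hc₂, rfl⟩, -⟩ ht₁ ht₂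
  obtain ⟨c, hc, hct⟩ := ThreeDegenerate.exists_isWormColoringOn_card_image_eq hdeg univ
    (isWormColoringOn_univ_iff.2 hc₁) (isWormColoringOn_univ_iff.2 hc₂) ht₁ ht₂
  exact ⟨c, isWormColoringOn_univ_iff.1 hc, hct⟩
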